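/- Let G₁ be a totally disconnected Hausdorff locally compact abelian group, G₂ a discrete abelian group, and G = G₁ × G₂ with the product topology. If φ is a continuous endomorphism of G such that the subgroup {0} × G₂ is φ-invariant, then h_top(φ|_{{0}×G₂}) = 0 and h_top(φ) = h_top(φ̄), where φ̄ is the endomorphism induced by φ on the quotient G/({0} × G₂). -/

import Mathlib

open MeasureTheory Filter Topology Pointwise
open scoped ENNReal NNReal Classical

/-- The `n`-th `φ`-cotrajectory of `U`: `U ∩ φ⁻¹(U) ∩ … ∩ φ⁻⁽ⁿ⁻¹⁾(U)`. -/
def cotraj {G : Type*} (φ : G → G) (U : Set G) (n : ℕ) : Set G :=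
  ⋂ k ∈ Finset.range n, (φ^[k]) ⁻¹' U

/-- Topological entropy of a (continuous) endomorphism of a locally compact Hausdorff
additive topological group, computed with respect to Haar measure:
`h_top(φ) = sup_U limsup_n (−log μ(C_n(φ,U)))/n`, the supremum over all compact
neighborhoods `U` of `0`. -/
noncomputable def addHtop {G : Type*} [AddGroup G] [TopologicalSpace G] (φ : G → G) : ℝ≥0∞ :=
  letI : MeasurableSpace G := borel G
  haveI : BorelSpace G := ⟨rfl⟩
  if h : IsTopologicalAddGroup G ∧ T2Space G ∧ LocallyCompactSpace G then
    haveI := h.1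
    haveI := h.2.1
    haveI := h.2.2
    ⨆ U ∈ {U : Set G | IsCompact U ∧ U ∈ 𝓝 (0 : G)},
      Filter.atTop.limsup fun n : ℕ =>
        ENNReal.ofReal
          ((-Real.log ((MeasureTheory.Measure.addHaar (cotraj φ U n)).toReal)) / n)
  else 0

/-- The restriction of an endomorphism to an invariant subgroup
(junk value `0` if the subgroup is not invariant). -/
noncomputable def subHom {G : Type*} [AddGroup G] (φ : G →+ G) (H : AddSubgroup G) : H →+ H :=
  if h : H ≤ H.comap φ then (φ.domRestrict H).codRestrict H (fun x => h x.2) else 0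

/-- The endomorphism induced on the quotient by an invariant subgroup
(junk value `0` if the subgroup is not invariant). -/
noncomputable def quotHom {G : Type*} [AddCommGroup G] (φ : G →+ G) (H : AddSubgroup G) :
    G ⧸ H →+ G ⧸ H :=
  if h : H ≤ H.comap φ then QuotientAddGroup.map H H φ h else 0

/-!
Haar-measure entropy only sees arbitrarily small compact neighbourhoods of `0`, and an open
embedding of locally compact groups pulls Haar measure back to a multiple of Haar measure. So if an
open embedding `j : A → B` satisfies `g ∘ j = j ∘ f` on a neighbourhood `W` of `0`, it carries the
cotrajectories of every compact `U ⊆ W` onto those of `j U`, with measures in a fixed ratio, and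
`h_top(f) = h_top(g)`.

With `ψ x = (φ (x, 0)).1` this applies to `x ↦ (x, 0)` into `G₁ × G₂` on the set where
`(φ (x, 0)).2 = 0`, open because `G₂` is discrete, and to `x ↦ [(x, 0)]` into `G₁ × G₂ ⧸ {0} × G₂`
on all of `G₁`; hence `h_top(φ) = h_top(ψ) = h_top(φ̄)`. On the discrete group `{0} × G₂` every
cotrajectory contains the atom `{0}`, of positive Haar measure, so the entropy vanishes.
-/

section Cotraj

variable {X : Type*} {φ : X → X} {U : Set X}

theorem cotraj_zero : cotraj φ U 0 = Set.univ := by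
  simp [cotraj]

theorem cotraj_succ (n : ℕ) : cotraj φ U (n + 1) = U ∩ φ ⁻¹' cotraj φ U n := by
  ext x
  simp only [cotraj, Finset.mem_range, Set.mem_iInter, Set.mem_inter_iff, Set.mem_preimage]
  rw [Nat.forall_lt_succ_left']
  simp only [Function.iterate_zero_apply, Function.iterate_succ_apply]

theorem cotraj_subset {n : ℕ} (hn : n ≠ 0) : cotraj φ U n ⊆ U := by
  obtain ⟨m, rfl⟩ := Nat.exists_eq_succ_of_ne_zero hn
  rw [cotraj_succ]
  exact Set.inter_subset_left

theorem cotraj_mono {V : Set X} (h : U ⊆ V) (n : ℕ) : cotraj φ U n ⊆ cotraj φ V n := by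
  induction n with
  | zero => simp [cotraj_zero]
  | succ n ih =>
    rw [cotraj_succ, cotraj_succ]
    exact Set.inter_subset_inter h (Set.preimage_mono ih)

theorem mem_cotraj_of_isFixedPt {x : X} (hx : φ x = x) (hxU : x ∈ U) (n : ℕ) :
    x ∈ cotraj φ U n := by
  induction n with
  | zero => simp [cotraj_zero]
  | succ n ih => rw [cotraj_succ]; exact ⟨hxU, by rwa [Set.mem_preimage, hx]⟩

theorem cotraj_mem_nhds [TopologicalSpace X] (hφ : Continuous φ) {x : X} (hx : φ x = x)
    (hU : U ∈ 𝓝 x) (n : ℕ) : cotraj φ U n ∈ 𝓝 x := by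
  induction n with
  | zero => simp [cotraj_zero]
  | succ n ih =>
    rw [cotraj_succ]
    exact inter_mem hU (hφ.continuousAt.preimage_mem_nhds (by rwa [hx]))

theorem image_cotraj_of_semiconj {Y : Type*} {f : X → X} {g : Y → Y} {j : X → Y}
    (hj : Function.Injective j) (hfg : ∀ x ∈ U, g (j x) = j (f x)) {n : ℕ} (hn : n ≠ 0) :
    j '' cotraj f U n = cotraj g (j '' U) n := by
  obtain ⟨m, rfl⟩ := Nat.exists_eq_succ_of_ne_zero hn
  induction m with
  | zero => simp only [cotraj_succ, cotraj_zero, Set.preimage_univ, Set.inter_univ]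
  | succ m ih =>
    rw [cotraj_succ (m + 1), cotraj_succ (m + 1), ← ih m.succ_ne_zero]
    ext y
    constructor
    · rintro ⟨x, ⟨hxU, hfx⟩, rfl⟩
      exact ⟨⟨x, hxU, rfl⟩, by rw [Set.mem_preimage, hfg x hxU]; exact ⟨f x, hfx, rfl⟩⟩
    · rintro ⟨⟨x, hxU, rfl⟩, hgx⟩
      rw [Set.mem_preimage, hfg x hxU, hj.mem_set_image] at hgx
      exact ⟨x, ⟨hxU, hgx⟩, rfl⟩

end Cotraj

section DecayRate

noncomputable def decayRate (a : ℕ → ℝ≥0∞) : ℝ≥0∞ :=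
  atTop.limsup fun n => ENNReal.ofReal (-Real.log (a n).toReal / n)

theorem tendsto_ofReal_div_natCast_zero (d : ℝ) :
    Tendsto (fun n : ℕ => ENNReal.ofReal (d / n)) atTop (𝓝 0) := by
  simpa [Function.comp_def] using
    (ENNReal.continuous_ofReal.tendsto 0).comp (tendsto_const_div_atTop_nhds_zero_nat d)

theorem decayRate_const (c : ℝ≥0∞) : decayRate (fun _ => c) = 0 :=
  (tendsto_ofReal_div_natCast_zero _).limsup_eq

theorem decayRate_congr {a b : ℕ → ℝ≥0∞} (h : a =ᶠ[atTop] b) : decayRate a = decayRate b :=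
  limsup_congr (h.mono fun n hn => by simp only [hn])

theorem decayRate_anti {a b : ℕ → ℝ≥0∞} (hab : ∀ᶠ n in atTop, a n ≤ b n)
    (ha : ∀ᶠ n in atTop, a n ≠ 0) (hb : ∀ᶠ n in atTop, b n ≠ ∞) : decayRate b ≤ decayRate a := by
  refine limsup_le_limsup ?_
  filter_upwards [hab, ha, hb] with n hab ha hb
  have ha' : 0 < (a n).toReal := ENNReal.toReal_pos ha (ne_top_of_le_ne_top hb hab)
  gcongr

theorem decayRate_const_mul_le (c : ℝ≥0∞) (a : ℕ → ℝ≥0∞) :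
    decayRate (fun n => c * a n) ≤ decayRate a := by
  have hterm : ∀ n : ℕ, ENNReal.ofReal (-Real.log (c * a n).toReal / n) ≤
      ENNReal.ofReal (|Real.log c.toReal| / n) + ENNReal.ofReal (-Real.log (a n).toReal / n) := by
    intro n
    rw [ENNReal.toReal_mul]
    -- where `c` or `a n` is `0` or `∞`, the left side is the junk value `log 0 = 0`
    rcases eq_or_ne c.toReal 0 with hc | hc
    · simp [hc]
    rcases eq_or_ne (a n).toReal 0 with ha | ha
    · simp [ha]
    refine le_trans (ENNReal.ofReal_le_ofReal ?_) ENNReal.ofReal_add_le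
    rw [Real.log_mul hc ha, ← add_div]
    gcongr
    linarith [neg_le_abs (Real.log c.toReal)]
  calc decayRate (fun n => c * a n)
      ≤ atTop.limsup ((fun n : ℕ => ENNReal.ofReal (|Real.log c.toReal| / n)) +
          fun n : ℕ => ENNReal.ofReal (-Real.log (a n).toReal / n)) :=
        limsup_le_limsup (Eventually.of_forall hterm)
    _ = decayRate a := ENNReal.limsup_add_of_left_tendsto_zero
        (tendsto_ofReal_div_natCast_zero _) _

theorem decayRate_const_mul {c : ℝ≥0∞} (hc : c ≠ 0) (hc' : c ≠ ∞) (a : ℕ → ℝ≥0∞) :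
    decayRate (fun n => c * a n) = decayRate a := by
  refine le_antisymm (decayRate_const_mul_le c a) ?_
  calc decayRate a = decayRate (fun n => c⁻¹ * (c * a n)) := by
        simp only [← mul_assoc, ENNReal.inv_mul_cancel hc hc', one_mul]
    _ ≤ decayRate (fun n => c * a n) := decayRate_const_mul_le _ _

end DecayRate

theorem measure_cotraj_ne_top {X : Type*} [TopologicalSpace X] [MeasurableSpace X]
    (μ : Measure X) [IsFiniteMeasureOnCompacts μ] (f : X → X) {U : Set X} (hU : IsCompact U)
    {n : ℕ} (hn : n ≠ 0) : μ (cotraj f U n) ≠ ∞ :=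
  (hU.measure_lt_top.trans_le' (measure_mono (cotraj_subset hn))).ne

theorem exists_addHaar_image_eq_mul {A B : Type*} [AddGroup A] [TopologicalSpace A]
    [IsTopologicalAddGroup A] [LocallyCompactSpace A] [MeasurableSpace A] [BorelSpace A]
    [AddGroup B] [TopologicalSpace B] [IsTopologicalAddGroup B] [MeasurableSpace B]
    [BorelSpace B] (μA : Measure A) [μA.IsAddHaarMeasure] (μB : Measure B)
    [μB.IsAddHaarMeasure] {j : A →+ B} (hj : IsOpenEmbedding j) :
    ∃ c : ℝ≥0∞, c ≠ 0 ∧ c ≠ ∞ ∧ ∀ s, IsCompact (closure s) → μB (j '' s) = c * μA s := by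
  have := Measure.IsAddHaarMeasure.comap (mH := inferInstance) μB hj
  have hc := (Measure.addHaarScalarFactor_pos_of_isAddHaarMeasure (μB.comap j) μA).ne'
  refine ⟨(μB.comap j).addHaarScalarFactor μA, by simpa using hc, ENNReal.coe_ne_top,
    fun s hs => ?_⟩
  rw [← hj.measurableEmbedding.comap_apply,
    Measure.measure_isAddInvariant_eq_smul_of_isCompact_closure _ μA hs, ENNReal.smul_def,
    smul_eq_mul]

section Entropy

variable {G : Type*} [AddGroup G] [TopologicalSpace G] [IsTopologicalAddGroup G] [T2Space G]
  [LocallyCompactSpace G] [MeasurableSpace G] [BorelSpace G]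

theorem addHtop_eq_iSup_decayRate (μ : Measure G) [μ.IsAddHaarMeasure] (f : G → G) :
    addHtop f = ⨆ U ∈ {U : Set G | IsCompact U ∧ U ∈ 𝓝 0},
      decayRate fun n => μ (cotraj f U n) := by
  obtain ⟨hborel⟩ := ‹BorelSpace G›
  subst hborel
  let _ : MeasurableSpace G := borel G
  rw [addHtop, dif_pos ⟨inferInstance, inferInstance, inferInstance⟩]
  refine iSup_congr fun U => iSup_congr fun hU => ?_
  obtain ⟨c, hc0, hc, hμ⟩ := exists_addHaar_image_eq_mul μ Measure.addHaar IsOpenEmbedding.id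
    (j := AddMonoidHom.id G)
  rw [← decayRate_const_mul hc0 hc]
  refine (decayRate_congr ?_).symm
  filter_upwards [eventually_ne_atTop 0] with n hn
  simpa using (hμ _ (hU.1.closure_of_subset (cotraj_subset hn))).symm

theorem decayRate_le_addHtop (μ : Measure G) [μ.IsAddHaarMeasure] (f : G → G) {U : Set G}
    (hU : IsCompact U) (hU0 : U ∈ 𝓝 0) : decayRate (fun n => μ (cotraj f U n)) ≤ addHtop f := by
  rw [addHtop_eq_iSup_decayRate μ]
  exact le_iSup₂ (f := fun U (_ : U ∈ {U : Set G | IsCompact U ∧ U ∈ 𝓝 0}) =>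
    decayRate fun n => μ (cotraj f U n)) U ⟨hU, hU0⟩

theorem addHtop_le_of_forall_subset (μ : Measure G) [μ.IsAddHaarMeasure] {f : G → G}
    (hf : Continuous f) (hf0 : f 0 = 0) {N : Set G} (hN : N ∈ 𝓝 0) {r : ℝ≥0∞}
    (h : ∀ U, IsCompact U → U ∈ 𝓝 0 → U ⊆ N → decayRate (fun n => μ (cotraj f U n)) ≤ r) :
    addHtop f ≤ r := by
  rw [addHtop_eq_iSup_decayRate μ]
  refine iSup₂_le fun V ⟨hV, hV0⟩ => ?_
  obtain ⟨U, hU0, hUVN, hU⟩ := local_compact_nhds (inter_mem hV0 hN)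
  refine le_trans (decayRate_anti ?_ ?_ ?_) (h U hU hU0 (hUVN.trans Set.inter_subset_right))
  · exact Eventually.of_forall fun n =>
      measure_mono (cotraj_mono (hUVN.trans Set.inter_subset_left) n)
  · exact Eventually.of_forall fun n =>
      (μ.measure_pos_of_mem_nhds (cotraj_mem_nhds hf hf0 hU0 n)).ne'
  · filter_upwards [eventually_ne_atTop 0] with n hn
    exact measure_cotraj_ne_top μ f hV hn

end Entropy

theorem addHtop_eq_of_isOpenEmbedding_of_semiconj {A B : Type*} [AddGroup A] [TopologicalSpace A]
    [IsTopologicalAddGroup A] [T2Space A] [LocallyCompactSpace A] [AddGroup B]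
    [TopologicalSpace B] [IsTopologicalAddGroup B] [T2Space B] [LocallyCompactSpace B]
    {j : A →+ B} (hj : IsOpenEmbedding j) {f : A → A} {g : B → B} (hf : Continuous f)
    (hf0 : f 0 = 0) (hg : Continuous g) (hg0 : g 0 = 0) {W : Set A} (hW : W ∈ 𝓝 0)
    (hfg : ∀ x ∈ W, g (j x) = j (f x)) : addHtop f = addHtop g := by
  let _ : MeasurableSpace A := borel A
  have : BorelSpace A := ⟨rfl⟩
  let _ : MeasurableSpace B := borel B
  have : BorelSpace B := ⟨rfl⟩
  let μA : Measure A := Measure.addHaar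
  let μB : Measure B := Measure.addHaar
  obtain ⟨c, hc0, hc, hμ⟩ := exists_addHaar_image_eq_mul μA μB hj
  have image_mem_nhds {U : Set A} (hU0 : U ∈ 𝓝 0) : j '' U ∈ 𝓝 0 := by
    simpa using hj.isOpenMap.image_mem_nhds hU0
  have decayRate_image {U : Set A} (hU : IsCompact U) (hUW : U ⊆ W) :
      decayRate (fun n => μB (cotraj g (j '' U) n)) = decayRate (fun n => μA (cotraj f U n)) := by
    rw [← decayRate_const_mul hc0 hc (fun n => μA (cotraj f U n))]
    refine decayRate_congr ?_
    filter_upwards [eventually_ne_atTop 0] with n hn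
    rw [← image_cotraj_of_semiconj hj.injective (fun x hx => hfg x (hUW hx)) hn,
      hμ _ (hU.closure_of_subset (cotraj_subset hn))]
  apply le_antisymm
  · refine addHtop_le_of_forall_subset μA hf hf0 hW fun U hU hU0 hUW => ?_
    rw [← decayRate_image hU hUW]
    exact decayRate_le_addHtop μB g (hU.image hj.continuous) (image_mem_nhds hU0)
  · refine addHtop_le_of_forall_subset μB hg hg0 (image_mem_nhds hW) fun V hV hV0 hVW => ?_
    have hVj : V ⊆ Set.range j := hVW.trans (Set.image_subset_range _ _)
    have hU : IsCompact (j ⁻¹' V) := (hj.isInducing.isCompact_preimage_iff hVj).2 hV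
    have hUW : j ⁻¹' V ⊆ W := by
      rw [← hj.injective.preimage_image W]
      exact Set.preimage_mono hVW
    rw [← Set.image_preimage_eq_of_subset hVj, decayRate_image hU hUW]
    exact decayRate_le_addHtop μA f hU
      (hj.continuous.continuousAt.preimage_mem_nhds (by rwa [map_zero]))

theorem addHtop_eq_zero_of_discreteTopology {G : Type*} [AddGroup G] [TopologicalSpace G]
    [DiscreteTopology G] {f : G → G} (hf0 : f 0 = 0) : addHtop f = 0 := by
  let _ : MeasurableSpace G := borel G
  have : BorelSpace G := ⟨rfl⟩
  let μ : Measure G := Measure.addHaar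
  rw [addHtop_eq_iSup_decayRate μ, ← nonpos_iff_eq_zero]
  refine iSup₂_le fun U ⟨hU, hU0⟩ => ?_
  calc decayRate (fun n => μ (cotraj f U n)) ≤ decayRate (fun _ => μ {0}) := by
        refine decayRate_anti (Eventually.of_forall fun n => ?_)
          (Eventually.of_forall fun _ => ?_) ?_
        · exact measure_mono (Set.singleton_subset_iff.2
            (mem_cotraj_of_isFixedPt hf0 (mem_of_mem_nhds hU0) n))
        · exact (μ.measure_pos_of_mem_nhds
            ((isOpen_discrete _).mem_nhds (Set.mem_singleton 0))).ne'
        · filter_upwards [eventually_ne_atTop 0] with n hn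
          exact measure_cotraj_ne_top μ f hU hn
    _ = 0 := decayRate_const _

theorem quotHom_mk {G : Type*} [AddCommGroup G] {φ : G →+ G} {H : AddSubgroup G}
    (hinv : H ≤ H.comap φ) (x : G) : quotHom φ H x = φ x := by
  rw [quotHom, dif_pos hinv]
  rfl

theorem continuous_quotHom {G : Type*} [AddCommGroup G] [TopologicalSpace G] {φ : G →+ G}
    (hφ : Continuous φ) {H : AddSubgroup G} (hinv : H ≤ H.comap φ) :
    Continuous (quotHom φ H) := by
  rw [quotHom, dif_pos hinv]
  exact (QuotientAddGroup.isQuotientMap_mk H).continuous_iff.2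
    ((QuotientAddGroup.isQuotientMap_mk H).continuous.comp hφ)

section DiscreteFactor

variable {G₁ G₂ : Type*} [AddCommGroup G₁] [TopologicalSpace G₁]
  [AddCommGroup G₂] [TopologicalSpace G₂] [DiscreteTopology G₂]

theorem isOpenEmbedding_inl_of_discreteTopology : IsOpenEmbedding (AddMonoidHom.inl G₁ G₂) := by
  refine ⟨isEmbedding_prodMkLeft 0, ?_⟩
  have hrange : Set.range (AddMonoidHom.inl G₁ G₂) = Set.univ ×ˢ {0} := by
    ext ⟨x, y⟩
    simp [eq_comm]
  rw [hrange]
  exact isOpen_univ.prod (isOpen_discrete _)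

instance discreteTopology_bot_prod_top :
    DiscreteTopology ((⊥ : AddSubgroup G₁).prod (⊤ : AddSubgroup G₂)) := by
  refine DiscreteTopology.of_continuous_injective (f := fun z => (z : G₁ × G₂).2) (by fun_prop) ?_
  intro z w h
  have hfst (v : (⊥ : AddSubgroup G₁).prod (⊤ : AddSubgroup G₂)) : (v : G₁ × G₂).1 = 0 :=
    AddSubgroup.mem_bot.1 (AddSubgroup.mem_prod.1 v.2).1
  exact Subtype.ext (Prod.ext ((hfst z).trans (hfst w).symm) h)

def topLeftEntry (φ : G₁ × G₂ →+ G₁ × G₂) : G₁ →+ G₁ :=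
  (AddMonoidHom.fst G₁ G₂).comp (φ.comp (AddMonoidHom.inl G₁ G₂))

theorem continuous_topLeftEntry {φ : G₁ × G₂ →+ G₁ × G₂} (hφ : Continuous φ) :
    Continuous (topLeftEntry φ) :=
  continuous_fst.comp (hφ.comp isOpenEmbedding_inl_of_discreteTopology.continuous)

variable [IsTopologicalAddGroup G₁]

theorem isOpenEmbedding_mk_comp_inl :
    IsOpenEmbedding ((QuotientAddGroup.mk' ((⊥ : AddSubgroup G₁).prod (⊤ : AddSubgroup G₂))).comp
      (AddMonoidHom.inl G₁ G₂)) := by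
  have hinl := isOpenEmbedding_inl_of_discreteTopology (G₁ := G₁) (G₂ := G₂)
  refine .of_continuous_injective_isOpenMap
    ((QuotientAddGroup.isQuotientMap_mk _).continuous.comp hinl.continuous) ?_
    (QuotientAddGroup.isOpenMap_coe.comp hinl.isOpenMap)
  refine (injective_iff_map_eq_zero _).2 fun x hx => ?_
  simpa [QuotientAddGroup.eq_zero_iff, AddSubgroup.mem_prod] using hx

variable [T2Space G₁] [LocallyCompactSpace G₁]

theorem addHtop_eq_addHtop_topLeftEntry {φ : G₁ × G₂ →+ G₁ × G₂} (hφ : Continuous φ) :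
    addHtop φ = addHtop (topLeftEntry φ) := by
  have hW : {x : G₁ | (φ (x, 0)).2 = 0} ∈ 𝓝 0 :=
    ((isOpen_discrete {0}).preimage (by fun_prop)).mem_nhds (by
      change (φ (AddMonoidHom.inl G₁ G₂ 0)).2 = 0
      rw [map_zero, map_zero, Prod.snd_zero])
  refine (addHtop_eq_of_isOpenEmbedding_of_semiconj isOpenEmbedding_inl_of_discreteTopology
    (continuous_topLeftEntry hφ) (map_zero _) hφ (map_zero φ) hW fun x hx => ?_).symm
  exact Prod.ext rfl hx

theorem addHtop_quotHom_eq_addHtop_topLeftEntry {φ : G₁ × G₂ →+ G₁ × G₂} (hφ : Continuous φ)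
    (hinv : (⊥ : AddSubgroup G₁).prod (⊤ : AddSubgroup G₂) ≤
      ((⊥ : AddSubgroup G₁).prod (⊤ : AddSubgroup G₂)).comap φ) :
    addHtop (quotHom φ ((⊥ : AddSubgroup G₁).prod (⊤ : AddSubgroup G₂))) =
      addHtop (topLeftEntry φ) := by
  have : IsClosed (((⊥ : AddSubgroup G₁).prod (⊤ : AddSubgroup G₂) : AddSubgroup (G₁ × G₂)) :
      Set (G₁ × G₂)) := by
    rw [AddSubgroup.coe_prod, AddSubgroup.coe_bot, AddSubgroup.coe_top]
    exact isClosed_singleton.prod isClosed_univ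
  refine (addHtop_eq_of_isOpenEmbedding_of_semiconj isOpenEmbedding_mk_comp_inl
    (continuous_topLeftEntry hφ) (map_zero _) (continuous_quotHom hφ hinv) (map_zero _)
    Filter.univ_mem fun x _ => ?_).symm
  simp only [AddMonoidHom.comp_apply, QuotientAddGroup.mk'_apply]
  rw [quotHom_mk hinv, QuotientAddGroup.eq]
  simp [AddSubgroup.mem_prod, topLeftEntry]

end DiscreteFactor

theorem entropy_prod_discrete_factor_general
    (G₁ G₂ : Type*) [AddCommGroup G₁] [TopologicalSpace G₁] [IsTopologicalAddGroup G₁]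
    [T2Space G₁] [LocallyCompactSpace G₁]
    [AddCommGroup G₂] [TopologicalSpace G₂] [DiscreteTopology G₂]
    (φ : G₁ × G₂ →+ G₁ × G₂) (hφ : Continuous φ)
    (hinv : AddSubgroup.prod (⊥ : AddSubgroup G₁) (⊤ : AddSubgroup G₂) ≤
      (AddSubgroup.prod (⊥ : AddSubgroup G₁) (⊤ : AddSubgroup G₂)).comap φ) :
    addHtop ⇑(subHom φ (AddSubgroup.prod (⊥ : AddSubgroup G₁) (⊤ : AddSubgroup G₂))) = 0 ∧
      addHtop ⇑φ =
        addHtop ⇑(quotHom φ (AddSubgroup.prod (⊥ : AddSubgroup G₁) (⊤ : AddSubgroup G₂))) :=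
  ⟨addHtop_eq_zero_of_discreteTopology (map_zero _),
    (addHtop_eq_addHtop_topLeftEntry hφ).trans
      (addHtop_quotHom_eq_addHtop_topLeftEntry hφ hinv).symm⟩

/-- Let `G₁` be a totally disconnected locally compact abelian group,
`G₂` a discrete abelian group, and `G = G₁ × G₂`. If `φ` is a continuous endomorphism of
`G` leaving `{0} × G₂` invariant, then `h_top(φ|_{{0}×G₂}) = 0` and `h_top(φ) = h_top(φ̄)`,
where `φ̄` is induced on `G/({0} × G₂)`. -/
theorem entropy_prod_discrete_factor
    (G₁ G₂ : Type*) [AddCommGroup G₁] [TopologicalSpace G₁] [IsTopologicalAddGroup G₁]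
    [T2Space G₁] [LocallyCompactSpace G₁] [TotallyDisconnectedSpace G₁]
    [AddCommGroup G₂] [TopologicalSpace G₂] [DiscreteTopology G₂]
    (φ : G₁ × G₂ →+ G₁ × G₂) (hφ : Continuous φ)
    (hinv : AddSubgroup.prod (⊥ : AddSubgroup G₁) (⊤ : AddSubgroup G₂) ≤
      (AddSubgroup.prod (⊥ : AddSubgroup G₁) (⊤ : AddSubgroup G₂)).comap φ) :
    addHtop ⇑(subHom φ (AddSubgroup.prod (⊥ : AddSubgroup G₁) (⊤ : AddSubgroup G₂))) = 0 ∧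
      addHtop ⇑φ =
        addHtop ⇑(quotHom φ (AddSubgroup.prod (⊥ : AddSubgroup G₁) (⊤ : AddSubgroup G₂))) :=
  entropy_prod_discrete_factor_general G₁ G₂ φ hφ hinv
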